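/- arXiv:2306.07749 — 9 statements merged into one kernel-verified Lean document; each statement's English description precedes it below -/
import Mathlib

section
/- Let Φ : Π → ℝ be a potential for (V_1, …, V_n). Let k ∈ ℕ, let C_1, …, C_k : Π → ℝ, let α_1, …, α_k ∈ ℝ, and let λ_1, …, λ_k ∈ ℝ with λ_j ≥ 0 for all j. Define the Lagrangian L(π) = Φ(π) + Σ_{j=1}^k λ_j (α_j − C_j(π)) and modified values Ṽ_i(π) = V_i(π) − Σ_{j=1}^k λ_j C_j(π). Then L is a potential for (Ṽ_1, …, Ṽ_n); that is, for every i ∈ {1, …, n}, every π ∈ Π and every π_i' ∈ Π^i, Ṽ_i(π_i', π_{-i}) − Ṽ_i(π) = L(π_i', π_{-i}) − L(π). -/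
/-- `Φ` is a potential for the value functions `V i` on the joint policy space
`(j : Fin n) → Pol j`. -/
def IsPotential {n : ℕ} {Pol : Fin n → Type*}
    (V : ∀ _ : Fin n, ((j : Fin n) → Pol j) → ℝ)
    (Φ : ((j : Fin n) → Pol j) → ℝ) : Prop :=
  ∀ (i : Fin n) (π : (j : Fin n) → Pol j) (π' : Pol i),
    V i (Function.update π i π') - V i π = Φ (Function.update π i π') - Φ π

/-- The Lagrangian of a constrained Markov potential game is a potential for the
Lagrangian-modified value functions. -/
theorem lagrangian_is_potential_for_modified_values
    {n : ℕ} {Pol : Fin n → Type*} [∀ i, Nonempty (Pol i)]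
    (V : ∀ _ : Fin n, ((j : Fin n) → Pol j) → ℝ)
    (Φ : ((j : Fin n) → Pol j) → ℝ)
    (hΦ : IsPotential V Φ)
    (k : ℕ) (C : Fin k → ((j : Fin n) → Pol j) → ℝ)
    (α : Fin k → ℝ) (lam : Fin k → ℝ) (hlam : ∀ j, 0 ≤ lam j) :
    IsPotential
      (fun i π => V i π - ∑ j : Fin k, lam j * C j π)
      (fun π => Φ π + ∑ j : Fin k, lam j * (α j - C j π)) := by
  intro i π π'
  have h := hΦ i π π'
  simp only [mul_sub]
  rw [Finset.sum_sub_distrib, Finset.sum_sub_distrib]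
  ring_nf
  linarith
end

section
/- The primal value of the counterexample game satisfies P* = sup{ xᵀA y : x, y ∈ Δ₂, xᵀB y ≤ 1/2 } = 9/2 − √2, and this supremum is attained at x = y = (1 − √(1/2), √(1/2)). -/
/-- The probability simplex in ℝ². -/
def simplex2 : Set (ℝ × ℝ) := {x | 0 ≤ x.1 ∧ 0 ≤ x.2 ∧ x.1 + x.2 = 1}

/-- Payoff `xᵀ A y` for `A = [[3,2],[2,4]]`. -/
def pay (x y : ℝ × ℝ) : ℝ := 3 * x.1 * y.1 + 2 * x.1 * y.2 + 2 * x.2 * y.1 + 4 * x.2 * y.2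

/-- Constraint value `xᵀ B y` for `B = [[0,0],[0,1]]`. -/
def con (x y : ℝ × ℝ) : ℝ := x.2 * y.2

lemma sqrt2_facts : (Real.sqrt 2)^2 = 2 ∧ Real.sqrt 2 = 2 * Real.sqrt (1/2) := by
  have h2 : (Real.sqrt 2)^2 = 2 := Real.sq_sqrt (by norm_num)
  have hw : (Real.sqrt (1/2))^2 = 1/2 := Real.sq_sqrt (by norm_num)
  have hr0 : 0 ≤ Real.sqrt 2 := Real.sqrt_nonneg _
  have hw0 : 0 ≤ Real.sqrt (1/2) := Real.sqrt_nonneg _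
  have key : (Real.sqrt 2 - 2 * Real.sqrt (1/2)) * (Real.sqrt 2 + 2 * Real.sqrt (1/2)) = 0 := by
    nlinarith [h2, hw]
  have hpos : 0 < Real.sqrt 2 + 2 * Real.sqrt (1/2) := by
    have : 0 < Real.sqrt 2 := Real.sqrt_pos.2 (by norm_num)
    linarith
  have := mul_eq_zero.1 key
  rcases this with h | h
  · exact ⟨h2, by linarith⟩
  · linarith

/-- The primal value of the counterexample game is `9/2 − √2`, attained at
`x = y = (1 − √(1/2), √(1/2))`. -/
theorem primal_value_counterexample :
    sSup {v : ℝ | ∃ x y : ℝ × ℝ, x ∈ simplex2 ∧ y ∈ simplex2 ∧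
        con x y ≤ 1 / 2 ∧ v = pay x y} = 9 / 2 - Real.sqrt 2 ∧
    (1 - Real.sqrt (1 / 2), Real.sqrt (1 / 2)) ∈ simplex2 ∧
    con (1 - Real.sqrt (1 / 2), Real.sqrt (1 / 2))
        (1 - Real.sqrt (1 / 2), Real.sqrt (1 / 2)) ≤ 1 / 2 ∧
    pay (1 - Real.sqrt (1 / 2), Real.sqrt (1 / 2))
        (1 - Real.sqrt (1 / 2), Real.sqrt (1 / 2)) = 9 / 2 - Real.sqrt 2 := by
  obtain ⟨hr2, hrw⟩ := sqrt2_facts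
  have hw2 : (Real.sqrt (1/2))^2 = 1/2 := Real.sq_sqrt (by norm_num)
  have hw0 : 0 ≤ Real.sqrt (1/2) := Real.sqrt_nonneg _
  have hr0 : 0 ≤ Real.sqrt 2 := Real.sqrt_nonneg _
  have hw1 : Real.sqrt (1/2) ≤ 1 := by nlinarith
  have hmem : (1 - Real.sqrt (1/2), Real.sqrt (1/2)) ∈ simplex2 :=
    ⟨by simpa using sub_nonneg.2 hw1, hw0, by ring⟩
  have hcon : con (1 - Real.sqrt (1/2), Real.sqrt (1/2))
      (1 - Real.sqrt (1/2), Real.sqrt (1/2)) ≤ 1/2 := by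
    simp only [con]
    nlinarith
  have hpay : pay (1 - Real.sqrt (1/2), Real.sqrt (1/2))
      (1 - Real.sqrt (1/2), Real.sqrt (1/2)) = 9/2 - Real.sqrt 2 := by
    simp only [pay]
    nlinarith [hw2, hrw]
  refine ⟨?_, hmem, hcon, hpay⟩
  apply IsGreatest.csSup_eq
  constructor
  · exact ⟨_, _, hmem, hmem, hcon, hpay.symm⟩
  · rintro v ⟨x, y, ⟨hx1, hx2, hxs⟩, ⟨hy1, hy2, hys⟩, hc, rfl⟩
    have hx1' : x.1 = 1 - x.2 := by linarith
    have hy1' : y.1 = 1 - y.2 := by linarith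
    have hst : 0 ≤ x.2 * y.2 := mul_nonneg hx2 hy2
    set u := Real.sqrt (x.2 * y.2) with hu
    have hu2 : u^2 = x.2 * y.2 := Real.sq_sqrt hst
    have hu0 : 0 ≤ u := Real.sqrt_nonneg _
    have hc' : x.2 * y.2 ≤ 1/2 := hc
    have h2u : 2 * u ≤ Real.sqrt 2 := by nlinarith [hu2, hr2, hc', hu0, hr0]
    have hsum : 2 * u ≤ x.2 + y.2 := by
      have h1 : x.2 * y.2 ≤ ((x.2 + y.2)/2)^2 := by nlinarith [sq_nonneg (x.2 - y.2)]
      have h2 := Real.sqrt_le_sqrt h1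
      rw [Real.sqrt_sq (by positivity : 0 ≤ (x.2 + y.2)/2)] at h2
      linarith
    have h34 : 4 ≤ 3 * Real.sqrt 2 := by nlinarith [hr2, hr0]
    have key1 : 0 ≤ (Real.sqrt 2 - 2*u) * u := mul_nonneg (by linarith) hu0
    have key2 : 0 ≤ (Real.sqrt 2 - 2*u) * (3 * Real.sqrt 2 - 4) :=
      mul_nonneg (by linarith) (by linarith)
    have final : 3 - (x.2 + y.2) + 3*u^2 ≤ 9/2 - Real.sqrt 2 := by
      linarith [key1, key2, hr2, hsum]
    simp only [pay]
    rw [hx1', hy1']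
    linarith [final, hu2]
end

section
/- The dual value of the counterexample game satisfies D* = inf_{λ ≥ 0} sup_{x, y ∈ Δ₂} [ xᵀA y + λ(1/2 − xᵀB y) ] = 7/2, and the infimum is attained at λ = 1, where sup_{x, y ∈ Δ₂} [ xᵀA y + 1·(1/2 − xᵀB y) ] = 7/2. -/
/-- The dual function of the counterexample game. -/
noncomputable def dualFn (lam : ℝ) : ℝ :=
  sSup {v : ℝ | ∃ x y : ℝ × ℝ, x ∈ simplex2 ∧ y ∈ simplex2 ∧
    v = pay x y + lam * (1 / 2 - con x y)}

lemma bddAbove_dualSet (lam : ℝ) (hl : 0 ≤ lam) :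
    BddAbove {v : ℝ | ∃ x y : ℝ × ℝ, x ∈ simplex2 ∧ y ∈ simplex2 ∧
      v = pay x y + lam * (1 / 2 - con x y)} := by
  refine ⟨4 + lam / 2, ?_⟩
  rintro v ⟨x, y, ⟨hx1, hx2, hxs⟩, ⟨hy1, hy2, hys⟩, rfl⟩
  simp only [pay, con]
  nlinarith [mul_nonneg hx1 hy1, mul_nonneg hx1 hy2, mul_nonneg hx2 hy1,
    mul_nonneg hx2 hy2, mul_nonneg hl (mul_nonneg hx2 hy2)]

lemma e1_mem : ((1:ℝ), (0:ℝ)) ∈ simplex2 := by norm_num [simplex2]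
lemma e2_mem : ((0:ℝ), (1:ℝ)) ∈ simplex2 := by norm_num [simplex2]

lemma dualFn_ge (lam : ℝ) (hl : 0 ≤ lam) : 7 / 2 ≤ dualFn lam := by
  rcases le_total lam 1 with h | h
  · have hmem : (4 - lam / 2 : ℝ) ∈ {v : ℝ | ∃ x y : ℝ × ℝ, x ∈ simplex2 ∧ y ∈ simplex2 ∧
        v = pay x y + lam * (1 / 2 - con x y)} := by
      refine ⟨(0, 1), (0, 1), e2_mem, e2_mem, ?_⟩
      simp [pay, con]; ring
    have := le_csSup (bddAbove_dualSet lam hl) hmem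
    unfold dualFn
    linarith
  · have hmem : (3 + lam / 2 : ℝ) ∈ {v : ℝ | ∃ x y : ℝ × ℝ, x ∈ simplex2 ∧ y ∈ simplex2 ∧
        v = pay x y + lam * (1 / 2 - con x y)} := by
      refine ⟨(1, 0), (1, 0), e1_mem, e1_mem, ?_⟩
      simp [pay, con]; ring
    have := le_csSup (bddAbove_dualSet lam hl) hmem
    unfold dualFn
    linarith

lemma dualFn_one : dualFn 1 = 7 / 2 := by
  unfold dualFn
  apply le_antisymm
  · apply csSup_le
    · exact ⟨3 + 1 / 2, (1, 0), (1, 0), e1_mem, e1_mem, by simp [pay, con]⟩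
    · rintro v ⟨x, y, ⟨hx1, hx2, hxs⟩, ⟨hy1, hy2, hys⟩, rfl⟩
      simp only [pay, con]
      nlinarith [mul_nonneg hx1 hy1, mul_nonneg hx1 hy2, mul_nonneg hx2 hy1,
        mul_nonneg hx2 hy2]
  · have hmem : (7 / 2 : ℝ) ∈ {v : ℝ | ∃ x y : ℝ × ℝ, x ∈ simplex2 ∧ y ∈ simplex2 ∧
        v = pay x y + 1 * (1 / 2 - con x y)} := by
      refine ⟨(1, 0), (1, 0), e1_mem, e1_mem, ?_⟩
      norm_num [pay, con]
    exact le_csSup (bddAbove_dualSet 1 zero_le_one) hmem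

/-- The dual value of the counterexample game is `7/2`, and the infimum over
`λ ≥ 0` is attained at `λ = 1`, where the dual function equals `7/2`. -/
theorem dual_value_counterexample :
    sInf {v : ℝ | ∃ lam : ℝ, 0 ≤ lam ∧ v = dualFn lam} = 7 / 2 ∧
    dualFn 1 = 7 / 2 := by
  refine ⟨?_, dualFn_one⟩
  apply le_antisymm
  · exact csInf_le ⟨7 / 2, by rintro v ⟨lam, hl, rfl⟩; exact dualFn_ge lam hl⟩
      ⟨1, zero_le_one, dualFn_one.symm⟩
  · exact le_csInf ⟨dualFn 1, 1, zero_le_one, rfl⟩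
      (by rintro v ⟨lam, hl, rfl⟩; exact dualFn_ge lam hl)
end

section
/- In the counterexample game, solving the dual problem can return an infeasible policy: for λ = 1, the strategy pair x = y = (0, 1) attains the supremum of the Lagrangian, i.e., xᵀA y + 1·(1/2 − xᵀB y) = 7/2 = sup_{x', y' ∈ Δ₂} [ x'ᵀA y' + 1·(1/2 − x'ᵀB y') ], yet it violates the constraint, since xᵀB y = 1 > 1/2. -/
lemma lag_le (x y : ℝ × ℝ) (hx : x ∈ simplex2) (hy : y ∈ simplex2) :
    pay x y + 1 * (1 / 2 - con x y) ≤ 7 / 2 := by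
  obtain ⟨hx1, hx2, hxs⟩ := hx
  obtain ⟨hy1, hy2, hys⟩ := hy
  simp only [pay, con]
  nlinarith [mul_nonneg hx1 hy2, mul_nonneg hx2 hy1, mul_nonneg hx1 hy1,
    mul_nonneg hx2 hy2]

/-- In the counterexample game, the dual solution for `λ = 1` given by
`x = y = (0, 1)` attains the supremum of the Lagrangian but violates the
constraint, since `xᵀB y = 1 > 1/2`. -/
theorem dual_can_return_infeasible_policy :
    ((0 : ℝ), (1 : ℝ)) ∈ simplex2 ∧
    pay (0, 1) (0, 1) + 1 * (1 / 2 - con (0, 1) (0, 1)) = 7 / 2 ∧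
    sSup {v : ℝ | ∃ x' y' : ℝ × ℝ, x' ∈ simplex2 ∧ y' ∈ simplex2 ∧
        v = pay x' y' + 1 * (1 / 2 - con x' y')} = 7 / 2 ∧
    con (0, 1) (0, 1) = 1 ∧
    (1 / 2 : ℝ) < 1 := by
  have hmem : ((0 : ℝ), (1 : ℝ)) ∈ simplex2 := by
    simp [simplex2]
  refine ⟨hmem, by norm_num [pay, con], ?_, by norm_num [con], by norm_num⟩
  apply le_antisymm
  · refine csSup_le ⟨7 / 2, ((0:ℝ),(1:ℝ)), ((0:ℝ),(1:ℝ)), hmem, hmem, by norm_num [pay, con]⟩ ?_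
    rintro v ⟨x', y', hx, hy, rfl⟩
    exact lag_le x' y' hx hy
  · apply le_csSup
    · exact ⟨7 / 2, by rintro v ⟨x', y', hx, hy, rfl⟩; exact lag_le x' y' hx hy⟩
    · exact ⟨((0:ℝ),(1:ℝ)), ((0:ℝ),(1:ℝ)), hmem, hmem, by norm_num [pay, con]⟩
end

section
/- In the counterexample game, the strategy pair x* = y* = (1, 0) is a feasible Nash policy: x*ᵀB y* = 0 ≤ 1/2; for every x ∈ Δ₂ with xᵀB y* ≤ 1/2 one has xᵀA y* ≤ x*ᵀA y* = 3; and for every y ∈ Δ₂ with x*ᵀB y ≤ 1/2 one has x*ᵀA y ≤ x*ᵀA y* = 3. -/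
/-- In the counterexample game, `x* = y* = (1, 0)` is a feasible Nash policy with
payoff `3`: no player can improve by a feasible unilateral deviation. -/
theorem pure_pair_is_feasible_nash :
    ((1 : ℝ), (0 : ℝ)) ∈ simplex2 ∧
    con (1, 0) (1, 0) = 0 ∧
    con (1, 0) (1, 0) ≤ 1 / 2 ∧
    pay (1, 0) (1, 0) = 3 ∧
    (∀ x ∈ simplex2, con x (1, 0) ≤ 1 / 2 → pay x (1, 0) ≤ pay (1, 0) (1, 0)) ∧
    (∀ y ∈ simplex2, con (1, 0) y ≤ 1 / 2 → pay (1, 0) y ≤ pay (1, 0) (1, 0)) := by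
  refine ⟨⟨by norm_num, by norm_num, by norm_num⟩, by simp [con], by simp [con], by norm_num [pay], ?_, ?_⟩
  · rintro ⟨x1, x2⟩ ⟨h1, h2, h3⟩ _
    simp only [pay]
    nlinarith
  · rintro ⟨y1, y2⟩ ⟨h1, h2, h3⟩ _
    simp only [pay]
    nlinarith
end

section
/- Let X be a nonempty set, let H > 0 and α ∈ ℝ. Let f̂ : X → ℝ with 0 ≤ f̂(x) ≤ H for all x, and let g, ĝ : X → ℝ. Suppose x_c ∈ X minimizes g over X, with ζ := α − g(x_c) > 0; let Δ ∈ (0, ζ/2) and α' = α − Δ. Suppose x̂_c ∈ X minimizes ĝ over X, that |ĝ(x_c) − g(x_c)| ≤ ζ/2 − Δ, that the set { x : ĝ(x) ≤ α' } is nonempty with F̂* = sup{ f̂(x) : ĝ(x) ≤ α' }, and that λ* ≥ 0 satisfies strong duality F̂* = sup_{x ∈ X} [ f̂(x) + λ*·(α' − ĝ(x)) ]. Then λ* ≤ 2H/ζ. -/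
/-- Bound on the optimal dual variable: if `x_c` minimizes the true cost `g`
with Slater constant `ζ = α − g(x_c) > 0`, `x̂_c` minimizes the empirical cost
`ĝ`, the empirical cost of `x_c` is accurate to within `ζ/2 − Δ`, and `λ* ≥ 0`
is an optimal dual variable of the empirical problem with tightened threshold
`α' = α − Δ`, then `λ* ≤ 2H/ζ`. -/
theorem dual_variable_bound
    {X : Type*} [Nonempty X]
    (H α : ℝ) (hH : 0 < H)
    (fhat : X → ℝ) (hf : ∀ x : X, 0 ≤ fhat x ∧ fhat x ≤ H)
    (g ghat : X → ℝ)
    (xc : X) (hxc : ∀ x : X, g xc ≤ g x)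
    (ζ : ℝ) (hζdef : ζ = α - g xc) (hζpos : 0 < ζ)
    (Δ : ℝ) (hΔ : 0 < Δ) (hΔlt : Δ < ζ / 2)
    (α' : ℝ) (hα' : α' = α - Δ)
    (xchat : X) (hxchat : ∀ x : X, ghat xchat ≤ ghat x)
    (hconc : |ghat xc - g xc| ≤ ζ / 2 - Δ)
    (hfeas : ∃ x : X, ghat x ≤ α')
    (Fstar : ℝ) (hFstar : Fstar = sSup {v : ℝ | ∃ x : X, ghat x ≤ α' ∧ v = fhat x})
    (lamstar : ℝ) (hlam : 0 ≤ lamstar)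
    (hdual : Fstar = sSup (Set.range fun x : X => fhat x + lamstar * (α' - ghat x))) :
    lamstar ≤ 2 * H / ζ := by
  -- key slack: α' - ghat xc ≥ ζ/2
  have habs : ghat xc - g xc ≤ ζ / 2 - Δ := (abs_le.mp hconc).2
  have hslack : ζ / 2 ≤ α' - ghat xc := by
    have := hζdef
    linarith
  -- Fstar ≤ H
  have hFle : Fstar ≤ H := by
    rw [hFstar]
    apply Real.sSup_le
    · rintro v ⟨x, -, rfl⟩
      exact (hf x).2
    · exact hH.le
  -- dual sup lower bound at xc
  have hbdd : BddAbove (Set.range fun x : X => fhat x + lamstar * (α' - ghat x)) := by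
    refine ⟨H + lamstar * (α' - ghat xchat), ?_⟩
    rintro v ⟨x, rfl⟩
    have h1 : fhat x ≤ H := (hf x).2
    have h2 : lamstar * (α' - ghat x) ≤ lamstar * (α' - ghat xchat) := by
      apply mul_le_mul_of_nonneg_left _ hlam
      linarith [hxchat x]
    dsimp only
    linarith
  have hge : fhat xc + lamstar * (α' - ghat xc) ≤ Fstar := by
    rw [hdual]
    exact le_csSup hbdd ⟨xc, rfl⟩
  have h3 : lamstar * (ζ / 2) ≤ lamstar * (α' - ghat xc) :=
    mul_le_mul_of_nonneg_left hslack hlam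
  have h4 : lamstar * (ζ / 2) ≤ H := by
    have := (hf xc).1
    linarith
  rw [le_div_iff₀ hζpos]
  nlinarith
end

section
/- Let ε > 0, let T ≥ 1 be a natural number, let v* ∈ ℝ, and let v_1, …, v_T and v̂_1, …, v̂_T be real numbers such that v_t ≤ v* and |v̂_t − v_t| ≤ ε/4 for every t ∈ {1, …, T}, and such that Σ_{t=1}^T (v* − v_t) ≤ (ε/2)·T. If t̂ ∈ {1, …, T} satisfies v̂_{t̂} ≥ v̂_t for all t ∈ {1, …, T}, then v* − v_{t̂} ≤ ε. -/
/-- Deterministic core of the online-to-batch conversion: if the true values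
`v_t` are at most `v*`, their average regret is at most `ε/2`, the estimates
`v̂_t` are accurate to within `ε/4`, and `t̂` maximizes the estimated value,
then `v* − v_{t̂} ≤ ε`. -/
theorem online_to_batch_core
    (ε : ℝ) (hε : 0 < ε)
    (T : ℕ) (hT : 1 ≤ T)
    (vstar : ℝ) (v vhat : Fin T → ℝ)
    (hub : ∀ t, v t ≤ vstar)
    (hacc : ∀ t, |vhat t - v t| ≤ ε / 4)
    (hreg : ∑ t, (vstar - v t) ≤ ε / 2 * T)
    (that : Fin T) (hmax : ∀ t, vhat t ≤ vhat that) :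
    vstar - v that ≤ ε := by
  obtain ⟨t0, ht0⟩ : ∃ t0 : Fin T, vstar - v t0 ≤ ε / 2 := by
    by_contra h
    push_neg at h
    have : ε / 2 * T < ∑ t, (vstar - v t) := by
      calc ε / 2 * T = ∑ _t : Fin T, ε / 2 := by
            simp [Finset.sum_const, mul_comm]
        _ < ∑ t, (vstar - v t) := by
            apply Finset.sum_lt_sum_of_nonempty
            · exact Finset.univ_nonempty_iff.mpr ⟨⟨0, hT⟩⟩
            · intro t _; exact h t
    linarith
  have h1 := abs_le.mp (hacc t0)
  have h2 := abs_le.mp (hacc that)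
  have h3 := hmax t0
  linarith [h1.1, h1.2, h2.1, h2.2]
end

section
/- Let H > 0, U > 0, let T ≥ 1 be a natural number, set η = U/(√T·H), and let α' ∈ [0, H]. Let X be a nonempty set and f, g : X → [0, H]. Assume: (i) the feasible set { x : g(x) ≤ α' } is nonempty and x* attains the maximum of f over it; (ii) there is λ* ∈ [0, U) with f(x*) = sup_{x ∈ X} [ f(x) + λ*·(α' − g(x)) ] (strong duality); (iii) the value set { (f(x), g(x)) : x ∈ X } ⊆ ℝ² is convex; and (iv) λ_0 = 0 and for each t = 0, …, T−1, x_t ∈ X attains the maximum of x ↦ f(x) + λ_t·(α' − g(x)) over X and λ_{t+1} = proj_{[0,U]}(λ_t − η·(α' − g(x_t))). Then the primal-dual iterates satisfy f(x*) − (1/T)·Σ_{t=0}^{T−1} f(x_t) ≤ U·H/√T and (1/T)·Σ_{t=0}^{T−1} g(x_t) ≤ α' + U·H/(√T·(U − λ*)). -/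
private lemma clamp_sq_le (U z l : ℝ) (h0 : 0 ≤ l) (hU : l ≤ U) :
    (min (max z 0) U - l) ^ 2 ≤ (z - l) ^ 2 := by
  have hU0 : (0:ℝ) ≤ U := le_trans h0 hU
  rcases le_total z 0 with h1 | h1
  · rw [max_eq_right h1, min_eq_left hU0]; nlinarith
  · rw [max_eq_left h1]
    rcases le_total z U with h2 | h2
    · rw [min_eq_left h2]
    · rw [min_eq_right h2]; nlinarith

/-- Guarantees for the primal-dual algorithm: under strong duality, convexity of
the value set, and exact Lagrangian best responses, the averaged primal iterates
are `UH/√T`-optimal in reward and violate the constraint threshold `α'` by at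
most `UH/(√T·(U − λ*))`. -/
theorem primal_dual_guarantees
    {X : Type*} [Nonempty X]
    (H U : ℝ) (hH : 0 < H) (hU : 0 < U)
    (T : ℕ) (hT : 1 ≤ T)
    (η : ℝ) (hη : η = U / (Real.sqrt T * H))
    (α' : ℝ) (hα'0 : 0 ≤ α') (hα'H : α' ≤ H)
    (f g : X → ℝ)
    (hf : ∀ x : X, 0 ≤ f x ∧ f x ≤ H)
    (hg : ∀ x : X, 0 ≤ g x ∧ g x ≤ H)
    -- (i) `xstar` attains the maximum of `f` over the nonempty feasible set
    (xstar : X) (hxstar_feas : g xstar ≤ α')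
    (hxstar_opt : ∀ x : X, g x ≤ α' → f x ≤ f xstar)
    -- (ii) strong duality with dual variable `λ* ∈ [0, U)`
    (lamstar : ℝ) (hlam0 : 0 ≤ lamstar) (hlamU : lamstar < U)
    (hdual : f xstar = sSup (Set.range fun x : X => f x + lamstar * (α' - g x)))
    -- (iii) the value set is convex
    (hconv : Convex ℝ {p : ℝ × ℝ | ∃ x : X, p = (f x, g x)})
    -- (iv) primal-dual iterates
    (xs : ℕ → X) (lam : ℕ → ℝ) (hlam_init : lam 0 = 0)
    (hprimal : ∀ t < T, ∀ x : X,
      f x + lam t * (α' - g x) ≤ f (xs t) + lam t * (α' - g (xs t)))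
    (hdual_update : ∀ t < T,
      lam (t + 1) = min (max (lam t - η * (α' - g (xs t))) 0) U) :
    f xstar - (1 / T) * ∑ t ∈ Finset.range T, f (xs t) ≤ U * H / Real.sqrt T ∧
    (1 / T) * ∑ t ∈ Finset.range T, g (xs t) ≤
      α' + U * H / (Real.sqrt T * (U - lamstar)) := by
  have hT0 : (0:ℝ) < T := by exact_mod_cast hT
  have hTne : (T:ℝ) ≠ 0 := ne_of_gt hT0
  have hsT : 0 < Real.sqrt T := Real.sqrt_pos.mpr hT0
  have hsTne : Real.sqrt (T:ℝ) ≠ 0 := ne_of_gt hsT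
  have hss : Real.sqrt (T:ℝ) * Real.sqrt (T:ℝ) = (T:ℝ) := Real.mul_self_sqrt hT0.le
  have hη0 : 0 < η := by rw [hη]; positivity
  set s : ℕ → ℝ := fun t => α' - g (xs t) with hs
  have hsbound : ∀ t : ℕ, s t ^ 2 ≤ H ^ 2 := by
    intro t
    have h1 := (hg (xs t)).1
    have h2 := (hg (xs t)).2
    have : -H ≤ s t ∧ s t ≤ H := by constructor <;> simp only [hs] <;> linarith
    exact sq_le_sq' this.1 this.2
  have hlam_bd : ∀ t, t ≤ T → 0 ≤ lam t ∧ lam t ≤ U := by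
    intro t ht
    cases t with
    | zero => simp [hlam_init, hU.le]
    | succ n =>
      rw [hdual_update n ht]
      exact ⟨le_min (le_max_right _ _) hU.le, min_le_right _ _⟩
  -- the key regret bound for the dual updates
  have key : ∀ l : ℝ, 0 ≤ l → l ≤ U →
      ∑ t ∈ Finset.range T, s t * (lam t - l) ≤ U * H * Real.sqrt T := by
    intro l hl0 hlU
    have step : ∀ t < T,
        2 * η * (s t * (lam t - l)) ≤
          (lam t - l) ^ 2 - (lam (t + 1) - l) ^ 2 + η ^ 2 * s t ^ 2 := by
      intro t ht
      have h1 : (lam (t + 1) - l) ^ 2 ≤ (lam t - η * s t - l) ^ 2 := by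
        rw [hdual_update t ht]
        exact clamp_sq_le U _ l hl0 hlU
      nlinarith [h1]
    have sum_step : ∑ t ∈ Finset.range T, 2 * η * (s t * (lam t - l)) ≤
        ∑ t ∈ Finset.range T,
          ((lam t - l) ^ 2 - (lam (t + 1) - l) ^ 2 + η ^ 2 * s t ^ 2) :=
      Finset.sum_le_sum fun t ht => step t (Finset.mem_range.mp ht)
    have tele : ∑ t ∈ Finset.range T, ((lam t - l) ^ 2 - (lam (t + 1) - l) ^ 2)
        = (lam 0 - l) ^ 2 - (lam T - l) ^ 2 :=
      Finset.sum_range_sub' (fun t => (lam t - l) ^ 2) T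
    have hsplit : ∑ t ∈ Finset.range T,
        ((lam t - l) ^ 2 - (lam (t + 1) - l) ^ 2 + η ^ 2 * s t ^ 2)
        = ((lam 0 - l) ^ 2 - (lam T - l) ^ 2)
          + η ^ 2 * ∑ t ∈ Finset.range T, s t ^ 2 := by
      rw [Finset.sum_add_distrib, tele, Finset.mul_sum]
    have hsum_sq : ∑ t ∈ Finset.range T, s t ^ 2 ≤ (T:ℝ) * H ^ 2 := by
      calc ∑ t ∈ Finset.range T, s t ^ 2 ≤ ∑ _t ∈ Finset.range T, H ^ 2 :=
            Finset.sum_le_sum fun t _ => hsbound t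
        _ = (T:ℝ) * H ^ 2 := by
            rw [Finset.sum_const, Finset.card_range, nsmul_eq_mul]
    have hkeyeq : η * (Real.sqrt T * H) = U := by
      rw [hη]; field_simp
    have hU2 : η ^ 2 * ((T:ℝ) * H ^ 2) = U ^ 2 := by
      linear_combination (-(η ^ 2 * H ^ 2)) * hss
        + (η * (Real.sqrt T * H) + U) * hkeyeq
    have e1 : 2 * η * (U * H * Real.sqrt T) = 2 * U ^ 2 := by
      rw [← hkeyeq]; ring
    have hlamT := hlam_bd T le_rfl
    have hl2 : l ^ 2 ≤ U ^ 2 := by nlinarith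
    have hchain : 2 * η * (∑ t ∈ Finset.range T, s t * (lam t - l)) ≤
        2 * η * (U * H * Real.sqrt T) := by
      rw [Finset.mul_sum]
      calc ∑ t ∈ Finset.range T, 2 * η * (s t * (lam t - l))
          ≤ ((lam 0 - l) ^ 2 - (lam T - l) ^ 2)
            + η ^ 2 * ∑ t ∈ Finset.range T, s t ^ 2 := by rw [← hsplit]; exact sum_step
        _ ≤ 2 * η * (U * H * Real.sqrt T) := by
            rw [hlam_init, e1]
            nlinarith [sq_nonneg (lam T - l), sq_nonneg η, hsum_sq]
    exact le_of_mul_le_mul_left hchain (by linarith)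
  -- primal optimality against xstar, summed
  have hT1 : (T:ℝ) * (1 / T) = 1 := by field_simp
  generalize hSf : ∑ t ∈ Finset.range T, f (xs t) = Sf
  generalize hSg : ∑ t ∈ Finset.range T, g (xs t) = Sg
  have hprim_sum : (T:ℝ) * f xstar ≤ Sf + ∑ t ∈ Finset.range T, lam t * s t := by
    have hstep : ∀ t < T, f xstar ≤ f (xs t) + lam t * s t := by
      intro t ht
      have h1 := hprimal t ht xstar
      have h2 : 0 ≤ lam t * (α' - g xstar) :=
        mul_nonneg (hlam_bd t ht.le).1 (by linarith)
      simp only [hs]; linarith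
    calc (T:ℝ) * f xstar = ∑ _t ∈ Finset.range T, f xstar := by
          rw [Finset.sum_const, Finset.card_range, nsmul_eq_mul]
      _ ≤ ∑ t ∈ Finset.range T, (f (xs t) + lam t * s t) :=
          Finset.sum_le_sum fun t ht => hstep t (Finset.mem_range.mp ht)
      _ = Sf + ∑ t ∈ Finset.range T, lam t * s t := by
          rw [← hSf]; exact Finset.sum_add_distrib
  -- key with l = 0
  have hk0 : ∑ t ∈ Finset.range T, lam t * s t ≤ U * H * Real.sqrt T := by
    have h := key 0 le_rfl hU.le
    have he : ∑ t ∈ Finset.range T, s t * (lam t - 0)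
        = ∑ t ∈ Finset.range T, lam t * s t :=
      Finset.sum_congr rfl fun t _ => by ring
    linarith [he ▸ h]
  -- part 1
  have part1 : f xstar - (1 / T) * Sf ≤ U * H / Real.sqrt T := by
    rw [le_div_iff₀ hsT]
    have e1' : (f xstar - (1 / T) * Sf) * Real.sqrt T * Real.sqrt T
        = (T:ℝ) * f xstar - Sf := by
      have : (1 / (T:ℝ)) * Sf * (Real.sqrt T * Real.sqrt T) = Sf := by
        rw [hss]; linear_combination Sf * hT1
      linear_combination (f xstar) * hss - this
    have h : (f xstar - (1 / T) * Sf) * Real.sqrt T * Real.sqrt T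
        ≤ (U * H) * Real.sqrt T := by
      rw [e1']; linarith
    exact le_of_mul_le_mul_right h hsT
  -- convexity: the average value pair is attained
  have hmem : ((1 / (T:ℝ)) * Sf, (1 / (T:ℝ)) * Sg)
      ∈ {p : ℝ × ℝ | ∃ x : X, p = (f x, g x)} := by
    have hw : ∑ _i ∈ Finset.range T, (1 / (T:ℝ)) = 1 := by
      rw [Finset.sum_const, Finset.card_range, nsmul_eq_mul]; field_simp
    have := hconv.sum_mem (t := Finset.range T) (w := fun _ => 1 / (T:ℝ))
      (z := fun i => ((f (xs i), g (xs i)) : ℝ × ℝ))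
      (fun i _ => by positivity) hw (fun i _ => ⟨xs i, rfl⟩)
    convert this using 1
    rw [Prod.ext_iff]
    constructor
    · rw [Prod.fst_sum]
      simp only [Prod.smul_fst, smul_eq_mul, one_div]
      rw [← hSf, Finset.mul_sum]
    · rw [Prod.snd_sum]
      simp only [Prod.smul_snd, smul_eq_mul, one_div]
      rw [← hSg, Finset.mul_sum]
  obtain ⟨xhat, hxhat⟩ := hmem
  rw [Prod.ext_iff] at hxhat
  obtain ⟨hfhat, hghat⟩ := hxhat
  simp only at hfhat hghat
  -- strong duality bound
  have hbdd : BddAbove (Set.range fun x : X => f x + lamstar * (α' - g x)) := by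
    refine ⟨H + lamstar * H, ?_⟩
    rintro y ⟨x, rfl⟩
    have h1 := (hf x).2
    have h2 := (hg x).1
    have h3 : lamstar * (α' - g x) ≤ lamstar * H :=
      mul_le_mul_of_nonneg_left (by linarith) hlam0
    simp only
    linarith
  have hFd : (1 / (T:ℝ)) * Sf + lamstar * (α' - (1 / (T:ℝ)) * Sg) ≤ f xstar := by
    rw [hfhat, hghat, hdual]
    exact le_csSup hbdd ⟨xhat, rfl⟩
  -- key with l = U
  have hsum_s : ∑ t ∈ Finset.range T, s t = (T:ℝ) * α' - Sg := by
    simp only [hs]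
    rw [Finset.sum_sub_distrib, Finset.sum_const, Finset.card_range, nsmul_eq_mul, hSg]
  have hexp : ∑ t ∈ Finset.range T, s t * (lam t - U)
      = (∑ t ∈ Finset.range T, lam t * s t) - U * ∑ t ∈ Finset.range T, s t := by
    rw [Finset.mul_sum, ← Finset.sum_sub_distrib]
    exact Finset.sum_congr rfl fun t _ => by ring
  have hkU : ∑ t ∈ Finset.range T, lam t * s t
      ≤ U * H * Real.sqrt T + U * ((T:ℝ) * α' - Sg) := by
    have h := key U hU.le le_rfl
    rw [hexp, hsum_s] at h
    linarith
  have h1 : (T:ℝ) * f xstar ≤ Sf + U * H * Real.sqrt T + U * ((T:ℝ) * α' - Sg) := by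
    linarith
  have h2 : Sf + lamstar * ((T:ℝ) * α' - Sg) ≤ (T:ℝ) * f xstar := by
    have h' := mul_le_mul_of_nonneg_left hFd hT0.le
    calc Sf + lamstar * ((T:ℝ) * α' - Sg)
        = (T:ℝ) * ((1 / (T:ℝ)) * Sf + lamstar * (α' - (1 / (T:ℝ)) * Sg)) := by
          linear_combination (lamstar * Sg - Sf) * hT1
      _ ≤ (T:ℝ) * f xstar := h'
  -- part 2
  have hden : 0 < Real.sqrt T * (U - lamstar) := by
    apply mul_pos hsT; linarith
  have part2 : (1 / (T:ℝ)) * Sg ≤ α' + U * H / (Real.sqrt T * (U - lamstar)) := by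
    rw [← sub_le_iff_le_add', le_div_iff₀ hden]
    have e3 : ((1 / (T:ℝ)) * Sg - α') * (Real.sqrt T * (U - lamstar)) * Real.sqrt T
        = (U - lamstar) * (Sg - (T:ℝ) * α') := by
      have h4 : (1 / (T:ℝ)) * Sg * (Real.sqrt T * Real.sqrt T) = Sg := by
        rw [hss]; linear_combination Sg * hT1
      linear_combination (U - lamstar) * h4 - ((U - lamstar) * α') * hss
    have h3 : ((1 / (T:ℝ)) * Sg - α') * (Real.sqrt T * (U - lamstar)) * Real.sqrt T
        ≤ (U * H) * Real.sqrt T := by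
      rw [e3]; linarith [h1, h2]
    exact le_of_mul_le_mul_right h3 hsT
  exact ⟨part1, part2⟩
end

section
/- Let π_0, …, π_{T−1} be policies of the finite-horizon MDP and let ρ̄_h(s, a) = (1/T)·Σ_{t=0}^{T−1} ρ^{π_t}_h(s, a) be the averaged occupancy measure. Define the policy π̄ by π̄_h(a | s) = ρ̄_h(s, a) / Σ_{a'} ρ̄_h(s, a') whenever Σ_{a'} ρ̄_h(s, a') > 0, and π̄_h(a | s) = 1/|A| otherwise. Then for every reward function l = (l_h)_{h=1}^H with l_h : S × A → ℝ, the value of π̄ equals the average of the values: V^l(π̄) = (1/T)·Σ_{t=0}^{T−1} V^l(π_t). -/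
open Finset

/-- Occupancy measure of a policy `π` in a finite-horizon MDP with initial
distribution `μ` and transition kernels `P`, with steps indexed `0, 1, …`
(step `h` here corresponds to step `h+1` in one-based notation):
`occ μ P π h s a` is the probability of being at the state-action pair `(s, a)`
at step `h`. -/
noncomputable def occ {S A : Type*} [Fintype S] [Fintype A]
    (μ : S → ℝ) (P : ℕ → S → A → S → ℝ) (π : ℕ → S → A → ℝ) :
    ℕ → S → A → ℝ
  | 0 => fun s a => μ s * π 0 s a
  | h + 1 => fun s a =>
      (∑ s' : S, ∑ a' : A, occ μ P π h s' a' * P h s' a' s) * π (h + 1) s a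

/-- Value of a policy `π` for the reward function `l` over horizon `H`:
`V^l(π) = ∑_{h<H} ∑_{(s,a)} ρ^π_h(s,a) · l_h(s,a)`. -/
noncomputable def val {S A : Type*} [Fintype S] [Fintype A]
    (μ : S → ℝ) (P : ℕ → S → A → S → ℝ) (H : ℕ)
    (l : ℕ → S → A → ℝ) (π : ℕ → S → A → ℝ) : ℝ :=
  ∑ h ∈ Finset.range H, ∑ s : S, ∑ a : A, occ μ P π h s a * l h s a

/-- The averaged occupancy measure `ρ̄_h(s,a) = (1/T) ∑_t ρ^{π_t}_h(s,a)`. -/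
noncomputable def avgOcc {S A : Type*} [Fintype S] [Fintype A]
    (μ : S → ℝ) (P : ℕ → S → A → S → ℝ) (T : ℕ)
    (πs : ℕ → ℕ → S → A → ℝ) : ℕ → S → A → ℝ :=
  fun h s a => (1 / T : ℝ) * ∑ t ∈ Finset.range T, occ μ P (πs t) h s a

open Classical in
/-- The policy `π̄` induced by the averaged occupancy measure: proportional to
`ρ̄_h(s,·)` where the state has positive probability, uniform otherwise. -/
noncomputable def mixPolicy {S A : Type*} [Fintype S] [Fintype A]
    (μ : S → ℝ) (P : ℕ → S → A → S → ℝ) (T : ℕ)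
    (πs : ℕ → ℕ → S → A → ℝ) : ℕ → S → A → ℝ :=
  fun h s a =>
    if 0 < ∑ a' : A, avgOcc μ P T πs h s a' then
      avgOcc μ P T πs h s a / ∑ a' : A, avgOcc μ P T πs h s a'
    else (1 : ℝ) / Fintype.card A

section Aux

variable {S A : Type*} [Fintype S] [Fintype A]

lemma occ_nonneg (μ : S → ℝ) (hμ : ∀ s, 0 ≤ μ s) (H : ℕ)
    (P : ℕ → S → A → S → ℝ)
    (hP : ∀ h, h + 1 < H → ∀ s a s', 0 ≤ P h s a s')
    (π : ℕ → S → A → ℝ) (hπ : ∀ h < H, ∀ s a, 0 ≤ π h s a) :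
    ∀ h < H, ∀ s a, 0 ≤ occ μ P π h s a := by
  intro h
  induction h with
  | zero =>
    intro hH s a
    exact mul_nonneg (hμ s) (hπ 0 hH s a)
  | succ n ih =>
    intro hH s a
    show 0 ≤ (∑ s' : S, ∑ a' : A, occ μ P π n s' a' * P n s' a' s) * π (n + 1) s a
    refine mul_nonneg ?_ (hπ _ hH s a)
    refine Finset.sum_nonneg fun s' _ => Finset.sum_nonneg fun a' _ => ?_
    exact mul_nonneg (ih (Nat.lt_of_succ_lt hH) s' a') (hP n hH s' a' s)

lemma avgOcc_nonneg (μ : S → ℝ) (hμ : ∀ s, 0 ≤ μ s) (H : ℕ)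
    (P : ℕ → S → A → S → ℝ)
    (hP : ∀ h, h + 1 < H → ∀ s a s', 0 ≤ P h s a s')
    (T : ℕ) (πs : ℕ → ℕ → S → A → ℝ)
    (hπs : ∀ t < T, ∀ h < H, ∀ s a, 0 ≤ πs t h s a) :
    ∀ h < H, ∀ s a, 0 ≤ avgOcc μ P T πs h s a := by
  intro h hH s a
  unfold avgOcc
  refine mul_nonneg (by positivity) (Finset.sum_nonneg fun t ht => ?_)
  exact occ_nonneg μ hμ H P hP (πs t) (hπs t (Finset.mem_range.mp ht)) h hH s a

lemma occ_mix (μ : S → ℝ) (hμ : ∀ s, 0 ≤ μ s) (H : ℕ)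
    (P : ℕ → S → A → S → ℝ)
    (hP : ∀ h, h + 1 < H → ∀ s a, (∀ s', 0 ≤ P h s a s') ∧ ∑ s' : S, P h s a s' = 1)
    (T : ℕ) (hT : 1 ≤ T) (πs : ℕ → ℕ → S → A → ℝ)
    (hπs : ∀ t < T, ∀ h < H, ∀ s,
      (∀ a, 0 ≤ πs t h s a) ∧ ∑ a : A, πs t h s a = 1) :
    ∀ h < H, ∀ s a,
      occ μ P (mixPolicy μ P T πs) h s a = avgOcc μ P T πs h s a := by
  classical
  have hTne : (T : ℝ) ≠ 0 := Nat.cast_ne_zero.mpr (by omega)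
  have hPn : ∀ h, h + 1 < H → ∀ s a s', 0 ≤ P h s a s' :=
    fun h hh s a s' => (hP h hh s a).1 s'
  have hπn : ∀ t < T, ∀ h < H, ∀ s a, 0 ≤ πs t h s a :=
    fun t ht h hh s a => (hπs t ht h hh s).1 a
  intro h
  induction h with
  | zero =>
    intro hH s a
    have hsum : ∑ a' : A, avgOcc μ P T πs 0 s a' = μ s := by
      unfold avgOcc
      rw [← Finset.mul_sum, Finset.sum_comm]
      have : ∀ t ∈ Finset.range T, ∑ a' : A, occ μ P (πs t) 0 s a' = μ s := by
        intro t ht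
        show ∑ a' : A, μ s * πs t 0 s a' = μ s
        rw [← Finset.mul_sum, (hπs t (Finset.mem_range.mp ht) 0 hH s).2, mul_one]
      rw [Finset.sum_congr rfl this, Finset.sum_const, Finset.card_range, nsmul_eq_mul]
      field_simp
    show μ s * mixPolicy μ P T πs 0 s a = avgOcc μ P T πs 0 s a
    unfold mixPolicy
    rw [hsum]
    by_cases hpos : 0 < μ s
    · rw [if_pos hpos, mul_div_cancel₀ _ (ne_of_gt hpos)]
    · have hμ0 : μ s = 0 := le_antisymm (not_lt.mp hpos) (hμ s)
      rw [if_neg hpos, hμ0, zero_mul]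
      unfold avgOcc
      have : ∀ t ∈ Finset.range T, occ μ P (πs t) 0 s a = 0 := by
        intro t _
        show μ s * πs t 0 s a = 0
        rw [hμ0, zero_mul]
      rw [Finset.sum_congr rfl this, Finset.sum_const_zero, mul_zero]
  | succ n ih =>
    intro hH s a
    have hnH : n < H := Nat.lt_of_succ_lt hH
    -- the "inflow" mass
    set M : ℝ := ∑ s' : S, ∑ a' : A, avgOcc μ P T πs n s' a' * P n s' a' s with hM
    have hocc : occ μ P (mixPolicy μ P T πs) (n + 1) s a
        = M * mixPolicy μ P T πs (n + 1) s a := by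
      show (∑ s' : S, ∑ a' : A,
          occ μ P (mixPolicy μ P T πs) n s' a' * P n s' a' s) *
          mixPolicy μ P T πs (n + 1) s a = _
      congr 1
      exact Finset.sum_congr rfl fun s' _ => Finset.sum_congr rfl fun a' _ => by
        rw [ih hnH s' a']
    -- M equals the total averaged occupancy at step n+1 in state s
    have swap2 : ∀ (g : ℕ → S → A → ℝ),
        ∑ s' : S, ∑ a' : A, ∑ t ∈ Finset.range T, g t s' a'
        = ∑ t ∈ Finset.range T, ∑ s' : S, ∑ a' : A, g t s' a' := by
      intro g
      calc ∑ s' : S, ∑ a' : A, ∑ t ∈ Finset.range T, g t s' a'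
          = ∑ s' : S, ∑ t ∈ Finset.range T, ∑ a' : A, g t s' a' :=
            Finset.sum_congr rfl fun _ _ => Finset.sum_comm
        _ = ∑ t ∈ Finset.range T, ∑ s' : S, ∑ a' : A, g t s' a' := Finset.sum_comm
    have step1 : ∀ s' a', avgOcc μ P T πs n s' a' * P n s' a' s
        = (1 / T : ℝ) * ∑ t ∈ Finset.range T, occ μ P (πs t) n s' a' * P n s' a' s := by
      intro s' a'
      unfold avgOcc
      rw [mul_assoc, Finset.sum_mul]
    have hM' : M = (1 / T : ℝ) * ∑ t ∈ Finset.range T, ∑ s' : S, ∑ a' : A,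
        occ μ P (πs t) n s' a' * P n s' a' s := by
      rw [hM,
        show (∑ s' : S, ∑ a' : A, avgOcc μ P T πs n s' a' * P n s' a' s)
          = ∑ s' : S, ∑ a' : A, (1 / T : ℝ) * ∑ t ∈ Finset.range T,
              occ μ P (πs t) n s' a' * P n s' a' s from
          Finset.sum_congr rfl fun s' _ => Finset.sum_congr rfl fun a' _ => step1 s' a']
      simp only [← Finset.mul_sum]
      rw [swap2]
    have hMeq : ∑ a' : A, avgOcc μ P T πs (n + 1) s a' = M := by
      unfold avgOcc
      rw [← Finset.mul_sum, Finset.sum_comm]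
      have h1 : ∀ t ∈ Finset.range T, ∑ a' : A, occ μ P (πs t) (n + 1) s a'
          = ∑ s' : S, ∑ a' : A, occ μ P (πs t) n s' a' * P n s' a' s := by
        intro t ht
        show ∑ a' : A, (∑ s' : S, ∑ a' : A, occ μ P (πs t) n s' a' * P n s' a' s)
            * πs t (n + 1) s a' = _
        rw [← Finset.mul_sum, (hπs t (Finset.mem_range.mp ht) (n + 1) hH s).2, mul_one]
      rw [Finset.sum_congr rfl h1, ← hM']
    have havg_nonneg : ∀ a', 0 ≤ avgOcc μ P T πs (n + 1) s a' :=
      fun a' => avgOcc_nonneg μ hμ H P hPn T πs hπn (n + 1) hH s a'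
    rw [hocc]
    unfold mixPolicy
    rw [hMeq]
    by_cases hpos : 0 < M
    · rw [if_pos hpos, mul_div_cancel₀ _ (ne_of_gt hpos)]
    · have hM0 : M = 0 := by
        have : 0 ≤ M := hMeq ▸ Finset.sum_nonneg fun a' _ => havg_nonneg a'
        linarith [not_lt.mp hpos]
      rw [if_neg hpos, hM0, zero_mul]
      have hsum0 : ∑ a' : A, avgOcc μ P T πs (n + 1) s a' = 0 := by rw [hMeq, hM0]
      have := (Finset.sum_eq_zero_iff_of_nonneg
        (fun a' _ => havg_nonneg a')).mp hsum0 a (Finset.mem_univ a)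
      rw [this]

end Aux
/-- The policy obtained from the averaged occupancy measure of policies
`π_0, …, π_{T−1}` has, for every reward function `l`, value equal to the average
of the values of the `π_t`. -/
theorem mixPolicy_value_eq_average
    {S A : Type*} [Fintype S] [Fintype A] [Nonempty S] [Nonempty A]
    (μ : S → ℝ) (hμ : (∀ s, 0 ≤ μ s) ∧ ∑ s : S, μ s = 1)
    (H : ℕ) (hHpos : 1 ≤ H)
    (P : ℕ → S → A → S → ℝ)
    (hP : ∀ h, h + 1 < H → ∀ s a, (∀ s', 0 ≤ P h s a s') ∧ ∑ s' : S, P h s a s' = 1)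
    (T : ℕ) (hT : 1 ≤ T)
    (πs : ℕ → ℕ → S → A → ℝ)
    (hπs : ∀ t < T, ∀ h < H, ∀ s,
      (∀ a, 0 ≤ πs t h s a) ∧ ∑ a : A, πs t h s a = 1) :
    ∀ l : ℕ → S → A → ℝ,
      val μ P H l (mixPolicy μ P T πs) =
        (1 / T : ℝ) * ∑ t ∈ Finset.range T, val μ P H l (πs t) := by
  intro l
  unfold _root_.val
  have hmix : ∀ h ∈ Finset.range H, ∑ s : S, ∑ a : A,
      occ μ P (mixPolicy μ P T πs) h s a * l h s a
      = ∑ s : S, ∑ a : A, (1 / T : ℝ) *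
          ∑ t ∈ Finset.range T, occ μ P (πs t) h s a * l h s a := by
    intro h hh
    refine Finset.sum_congr rfl fun s _ => Finset.sum_congr rfl fun a _ => ?_
    rw [occ_mix μ hμ.1 H P hP T hT πs hπs h (Finset.mem_range.mp hh) s a]
    unfold avgOcc
    rw [mul_assoc, Finset.sum_mul]
  rw [Finset.sum_congr rfl hmix]
  have swap : ∀ (g : ℕ → ℕ → S → A → ℝ),
      ∑ h ∈ Finset.range H, ∑ s : S, ∑ a : A, ∑ t ∈ Finset.range T, g t h s a
      = ∑ t ∈ Finset.range T, ∑ h ∈ Finset.range H, ∑ s : S, ∑ a : A, g t h s a := by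
    intro g
    calc ∑ h ∈ Finset.range H, ∑ s : S, ∑ a : A, ∑ t ∈ Finset.range T, g t h s a
        = ∑ h ∈ Finset.range H, ∑ s : S, ∑ t ∈ Finset.range T, ∑ a : A, g t h s a :=
          Finset.sum_congr rfl fun h _ => Finset.sum_congr rfl fun s _ => Finset.sum_comm
      _ = ∑ h ∈ Finset.range H, ∑ t ∈ Finset.range T, ∑ s : S, ∑ a : A, g t h s a :=
          Finset.sum_congr rfl fun h _ => Finset.sum_comm
      _ = ∑ t ∈ Finset.range T, ∑ h ∈ Finset.range H, ∑ s : S, ∑ a : A, g t h s a :=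
          Finset.sum_comm
  simp only [← Finset.mul_sum]
  rw [swap fun t h s a => occ μ P (πs t) h s a * l h s a]
end
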